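/- arXiv:2404.17541 — 2 statements merged into one kernel-verified Lean document; each statement's English description precedes it below -/
import Mathlib

section
/- For real numbers $v_i, v_j$ with $0 < v^l_i \le v_i \le v^u_i$ and $0 < v^l_j \le v_j \le v^u_j$, writing $v^\sigma_i = v^l_i + v^u_i$ and $v^\sigma_j = v^l_j + v^u_j$, the inequality $v^\sigma_i v^\sigma_j v_i v_j - v^u_j v^\sigma_j v_i^2 - v^u_i v^\sigma_i v_j^2 \ge v^u_i v^u_j (v^l_i v^l_j - v^u_i v^u_j)$ holds. -/
/-!
The gap between the two sides is a combination, with coefficients that are positive on the box,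
of the products of box slacks `(vᵢ - vᵢˡ)(vᵢᵘ - vᵢ)`, `(vⱼ - vⱼˡ)(vⱼᵘ - vⱼ)` and `(vᵢᵘ - vᵢ)(vⱼᵘ - vⱼ)`,
each of which is nonnegative.
-/

theorem lifted_cut_gap_eq {R : Type*} [CommRing R] (vi vj vil viu vjl vju : R) :
    (vil + viu) * (vjl + vju) * vi * vj - vju * (vjl + vju) * vi ^ 2 - viu * (vil + viu) * vj ^ 2
        - viu * vju * (vil * vjl - viu * vju) =
      vju * (vjl + vju) * ((vi - vil) * (viu - vi)) + viu * (vil + viu) * ((vj - vjl) * (vju - vj))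
        + (vil + viu) * (vjl + vju) * ((viu - vi) * (vju - vj)) := by
  ring

theorem stmt_5 (vi vj vil viu vjl vju : ℝ)
    (h1 : 0 < vil) (h2 : vil ≤ vi) (h3 : vi ≤ viu)
    (h4 : 0 < vjl) (h5 : vjl ≤ vj) (h6 : vj ≤ vju)
    (vsi vsj : ℝ) (hsi : vsi = vil + viu) (hsj : vsj = vjl + vju) :
    vsi * vsj * vi * vj - vju * vsj * vi ^ 2 - viu * vsi * vj ^ 2 ≥
      viu * vju * (vil * vjl - viu * vju) := by
  subst hsi hsj
  have hviu : 0 < viu := by linarith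
  have hvju : 0 < vju := by linarith
  have hvsi : 0 < vil + viu := by linarith
  have hvsj : 0 < vjl + vju := by linarith
  have h_terms := add_nonneg (add_nonneg
    (mul_nonneg (mul_pos hvju hvsj).le (mul_nonneg (sub_nonneg.2 h2) (sub_nonneg.2 h3)))
    (mul_nonneg (mul_pos hviu hvsi).le (mul_nonneg (sub_nonneg.2 h5) (sub_nonneg.2 h6))))
    (mul_nonneg (mul_pos hvsi hvsj).le (mul_nonneg (sub_nonneg.2 h3) (sub_nonneg.2 h6)))
  linarith [lifted_cut_gap_eq vi vj vil viu vjl vju]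
end

section
/- Let $v_i, v_j, \theta$ satisfy $0 < v^l_i \le v_i \le v^u_i$, $0 < v^l_j \le v_j \le v^u_j$, and $\theta^l \le \theta \le \theta^u$ with $\theta^u - \theta^l < \pi$. Set $w_i = v_i^2$, $w^R = v_i v_j \cos\theta$, $w^I = v_i v_j \sin\theta$, $\phi = (\theta^u+\theta^l)/2$, $\delta = (\theta^u-\theta^l)/2$, $v^\sigma_i = v^l_i + v^u_i$, $v^\sigma_j = v^l_j + v^u_j$. Then $v^\sigma_i v^\sigma_j (w^R\cos\phi + w^I\sin\phi) - v^u_j \cos(\delta)\, v^\sigma_j\, w_i - v^u_i \cos(\delta)\, v^\sigma_i\, \frac{(w^R)^2+(w^I)^2}{w_i} \ge v^u_i v^u_j \cos(\delta)\,(v^l_i v^l_j - v^u_i v^u_j)$. -/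
/-!
Write `c = cos δ`. The lifted terms collapse to `wR cos φ + wI sin φ = vi vj cos (θ - φ)` and
`(wR² + wI²) / wi = vj²`, and `|θ - φ| ≤ δ < π / 2` gives `cos (θ - φ) ≥ c > 0`. Hence the left-hand
side is at least `c` times a polynomial in `vi, vj` which, on the voltage box, dominates
`viu vju (vil vjl - viu vju)`: the difference is a sum of products of the nonnegative slacks
`vi - vil`, `viu - vi`, `vj - vjl`, `vju - vj`.
-/

open Real

lemma lnc_polynomial_bound {vi vj vil viu vjl vju : ℝ}
    (hil : 0 ≤ vil) (hi₁ : vil ≤ vi) (hi₂ : vi ≤ viu)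
    (hjl : 0 ≤ vjl) (hj₁ : vjl ≤ vj) (hj₂ : vj ≤ vju) :
    viu * vju * (vil * vjl - viu * vju) ≤
      (vil + viu) * (vjl + vju) * (vi * vj) - vju * (vjl + vju) * vi ^ 2
        - viu * (vil + viu) * vj ^ 2 := by
  have key :
      (vil + viu) * (vjl + vju) * (vi * vj) - vju * (vjl + vju) * vi ^ 2
        - viu * (vil + viu) * vj ^ 2 - viu * vju * (vil * vjl - viu * vju)
      = vju * (vjl + vju) * ((vi - vil) * (viu - vi))
        + (vil + viu) * (vju - vj) * (viu * (vj - vjl))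
        + (vil + viu) * (vju - vj) * ((viu - vi) * (vju + vjl)) := by ring
  have t₁ : 0 ≤ vju * (vjl + vju) * ((vi - vil) * (viu - vi)) := by
    apply mul_nonneg <;> apply mul_nonneg <;> linarith
  have t₂ : 0 ≤ (vil + viu) * (vju - vj) * (viu * (vj - vjl)) := by
    apply mul_nonneg <;> apply mul_nonneg <;> linarith
  have t₃ : 0 ≤ (vil + viu) * (vju - vj) * ((viu - vi) * (vju + vjl)) := by
    apply mul_nonneg <;> apply mul_nonneg <;> linarith
  linarith

lemma mul_cos_mul_add_mul_sin_mul (r θ φ : ℝ) :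
    r * cos θ * cos φ + r * sin θ * sin φ = r * cos (θ - φ) := by
  rw [cos_sub]; ring

lemma sq_mul_cos_add_sq_mul_sin_div_sq {a : ℝ} (ha : a ≠ 0) (b θ : ℝ) :
    ((a * b * cos θ) ^ 2 + (a * b * sin θ) ^ 2) / a ^ 2 = b ^ 2 := by
  have h : (a * b * cos θ) ^ 2 + (a * b * sin θ) ^ 2 = a ^ 2 * b ^ 2 := by
    linear_combination (a * b) ^ 2 * cos_sq_add_sin_sq θ
  rw [h, mul_div_cancel_left₀ _ (pow_ne_zero 2 ha)]

lemma cos_half_sub_le_cos_sub_half_add {θ θl θu : ℝ} (hl : θl ≤ θ) (hu : θ ≤ θu)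
    (hπ : θu - θl ≤ 2 * π) :
    cos ((θu - θl) / 2) ≤ cos (θ - (θu + θl) / 2) := by
  rw [← cos_abs (θ - _)]
  apply cos_le_cos_of_nonneg_of_le_pi (abs_nonneg _) (by linarith)
  rw [abs_le]
  constructor <;> linarith

lemma cos_half_pos_of_lt_pi {x : ℝ} (h₀ : 0 ≤ x) (hπ : x < π) : 0 < cos (x / 2) :=
  cos_pos_of_mem_Ioo ⟨by linarith [pi_pos], by linarith⟩

theorem stmt_7 (vi vj θ vil viu vjl vju θl θu : ℝ)
    (h1 : 0 < vil) (h2 : vil ≤ vi) (h3 : vi ≤ viu)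
    (h4 : 0 < vjl) (h5 : vjl ≤ vj) (h6 : vj ≤ vju)
    (h7 : θl ≤ θ) (h8 : θ ≤ θu) (h9 : θu - θl < Real.pi)
    (wi wR wI φ δ vsi vsj : ℝ)
    (hwi : wi = vi ^ 2) (hR : wR = vi * vj * Real.cos θ) (hI : wI = vi * vj * Real.sin θ)
    (hφ : φ = (θu + θl) / 2) (hδ : δ = (θu - θl) / 2)
    (hsi : vsi = vil + viu) (hsj : vsj = vjl + vju) :
    vsi * vsj * (wR * Real.cos φ + wI * Real.sin φ)
      - vju * Real.cos δ * vsj * wi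
      - viu * Real.cos δ * vsi * ((wR ^ 2 + wI ^ 2) / wi)
    ≥ viu * vju * Real.cos δ * (vil * vjl - viu * vju) := by
  subst hwi hR hI hφ hδ hsi hsj
  have hvi : 0 < vi := h1.trans_le h2
  have hvj : 0 < vj := h4.trans_le h5
  rw [mul_cos_mul_add_mul_sin_mul, sq_mul_cos_add_sq_mul_sin_div_sq hvi.ne']
  have hcos_le := cos_half_sub_le_cos_sub_half_add h7 h8 (by linarith [pi_pos])
  have hcos_pos := cos_half_pos_of_lt_pi (by linarith) h9
  have hpoly := lnc_polynomial_bound h1.le h2 h3 h4.le h5 h6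
  have hweight : 0 ≤ (vil + viu) * (vjl + vju) * (vi * vj) := by
    have : 0 < viu := hvi.trans_le h3
    have : 0 < vju := hvj.trans_le h6
    positivity
  linarith [mul_le_mul_of_nonneg_left hcos_le hweight, mul_le_mul_of_nonneg_left hpoly hcos_pos.le]
end
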